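/- arXiv:2404.19736 — 2 statements merged into one kernel-verified Lean document; each statement's English description precedes it below -/
import Mathlib

section
/- Fix 0 < λ ≤ 1, K ≥ 0, reals 0 < a < b and c < d < 0, and ω > 0. Let ξ : ℝ² → ℂ satisfy |ξ(p) − ξ(q)| ≤ K·|p − q|^λ for all p, q, and ξ(x,y) = 0 whenever (x,y) ∉ [a,b] × [c,d]. Define G(τ) = ∬_{ℝ²} ξ(x,y) · e^{τω} / (x e^{τω} − y)^{2} dx dy for complex τ. Then G is holomorphic (complex differentiable) on the strip { τ ∈ ℂ : |Im τ| < π/(2ω) }, and for every real t one has G(t) = ∬_{ℝ²} ξ(e^{−tω} x, y) (x − y)^{-2} dx dy. -/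
/-!
Write `G(τ) = H(e^{τω})` with `H(z) = ∫ ξ(p) z / (p₁ z - p₂)²`. On the compact box carrying `ξ`
one has `p₁ > 0 > p₂`, so for `Re z ≥ 0` the denominator has real part at least `-d > 0`; the
kernel and its `z`-derivative are then continuous on (right half-plane) × box, hence locally
uniformly bounded, and `H` is holomorphic on `Re z > 0` by differentiation under the integral.
The exponential maps the strip `|Im τ| < π/(2ω)` into that half-plane. For real `t` the identity
is the substitution `x ↦ e^{tω} x` in the first coordinate.
-/

open MeasureTheory Filter Topology

theorem continuous_of_norm_sub_le_mul_dist_rpow {X F : Type*} [PseudoMetricSpace X]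
    [SeminormedAddCommGroup F] {f : X → F} {K lam : ℝ} (hlam : 0 < lam)
    (h : ∀ p q, ‖f p - f q‖ ≤ K * dist p q ^ lam) : Continuous f := by
  refine continuous_iff_continuousAt.2 fun p => ?_
  rw [ContinuousAt, tendsto_iff_norm_sub_tendsto_zero]
  have hlim : Tendsto (fun q => K * dist q p ^ lam) (𝓝 p) (𝓝 0) := by
    simpa [Real.zero_rpow hlam.ne'] using
      (((continuous_id.dist (continuous_const (y := p))).rpow_const
        fun _ => Or.inr hlam.le).const_mul K).tendsto p
  exact squeeze_zero (fun _ => norm_nonneg _) (fun q => h q p) hlim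

section ParametricIntegral

variable {Y 𝕜 : Type*} [TopologicalSpace Y] [T2Space Y] [MeasurableSpace Y]
  [OpensMeasurableSpace Y] {μ : Measure Y} [IsFiniteMeasureOnCompacts μ] [RCLike 𝕜]
  {ξ : Y → 𝕜} {s : Set Y}

theorem integrable_mul_of_continuousOn_of_isCompact (hs : IsCompact s) (hξ : ContinuousOn ξ s)
    (hξs : ∀ y ∉ s, ξ y = 0) {g : Y → 𝕜} (hg : ContinuousOn g s) :
    Integrable (fun y => ξ y * g y) μ := by
  refine (integrableOn_iff_integrable_of_support_subset fun y hy => ?_).1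
    ((hξ.mul hg).integrableOn_compact hs)
  by_contra hys
  exact hy (by simp [hξs y hys])

theorem differentiableOn_integral_mul_of_isCompact (hs : IsCompact s) (hξ : ContinuousOn ξ s)
    (hξs : ∀ y ∉ s, ξ y = 0) {U : Set 𝕜} (hU : IsOpen U) {k k' : 𝕜 → Y → 𝕜}
    (hk : ∀ z ∈ U, ContinuousOn (k z) s) (hk' : ContinuousOn (Function.uncurry k') (U ×ˢ s))
    (hderiv : ∀ z ∈ U, ∀ y ∈ s, HasDerivAt (k · y) (k' z y) z) :
    DifferentiableOn 𝕜 (fun z => ∫ y, ξ y * k z y ∂μ) U := by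
  intro z₀ hz₀
  obtain ⟨r, hr, hrU⟩ := Metric.nhds_basis_closedBall.mem_iff.1 (hU.mem_nhds hz₀)
  obtain ⟨M, hM⟩ := ((isCompact_closedBall z₀ r).prod hs).exists_bound_of_continuousOn
    (hk'.mono (Set.prod_mono hrU le_rfl))
  have hk'₀ : ContinuousOn (k' z₀) s :=
    hk'.comp (continuousOn_const.prodMk continuousOn_id) fun _ hy => ⟨hz₀, hy⟩
  have hξ_int : Integrable ξ μ := by
    simpa using integrable_mul_of_continuousOn_of_isCompact (μ := μ) hs hξ hξs
      (continuousOn_const (c := (1 : 𝕜)))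
  have hbound : ∀ y, ∀ z ∈ Metric.closedBall z₀ r, ‖ξ y * k' z y‖ ≤ ‖ξ y‖ * M := by
    intro y z hz
    by_cases hy : y ∈ s
    · rw [norm_mul]
      exact mul_le_mul_of_nonneg_left (hM (z, y) ⟨hz, hy⟩) (norm_nonneg _)
    · simp [hξs y hy]
  have hdiff : ∀ y, ∀ z ∈ Metric.closedBall z₀ r,
      HasDerivAt (fun w => ξ y * k w y) (ξ y * k' z y) z := by
    intro y z hz
    by_cases hy : y ∈ s
    · exact (hderiv z (hrU hz) y hy).const_mul (ξ y)
    · simpa [hξs y hy] using hasDerivAt_const z (0 : 𝕜)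
  exact (hasDerivAt_integral_of_dominated_loc_of_deriv_le (Metric.closedBall_mem_nhds z₀ hr)
    (eventually_of_mem (hU.mem_nhds hz₀) fun z hz =>
      (integrable_mul_of_continuousOn_of_isCompact hs hξ hξs (hk z hz)).aestronglyMeasurable)
    (integrable_mul_of_continuousOn_of_isCompact hs hξ hξs (hk z₀ hz₀))
    (integrable_mul_of_continuousOn_of_isCompact hs hξ hξs hk'₀).aestronglyMeasurable
    (.of_forall hbound) (hξ_int.norm.mul_const M)
    (.of_forall hdiff)).2.differentiableAt.differentiableWithinAt

end ParametricIntegral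

theorem integral_comp_mul_fst {E : Type*} [NormedAddCommGroup E] [NormedSpace ℝ E]
    (f : ℝ × ℝ → E) {r : ℝ} (hr : r ≠ 0) :
    ∫ p : ℝ × ℝ, f (r * p.1, p.2) = |r⁻¹| • ∫ p : ℝ × ℝ, f p := by
  let e : ℝ × ℝ ≃ᵐ ℝ × ℝ :=
    ((Homeomorph.mulLeft₀ r hr).prodCongr (Homeomorph.refl ℝ)).toMeasurableEquiv
  have hmap : Measure.map e volume = ENNReal.ofReal |r⁻¹| • (volume : Measure (ℝ × ℝ)) := by
    calc Measure.map (Prod.map (r * ·) id) (volume.prod volume)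
        = (Measure.map (r * ·) volume).prod (Measure.map id (volume : Measure ℝ)) :=
          (Measure.map_prod_map _ _ (measurable_const_mul r) measurable_id).symm
      _ = _ := by
          rw [Real.map_volume_mul_left hr, Measure.map_id, Measure.prod_smul_left,
            Measure.volume_eq_prod]
  calc ∫ p : ℝ × ℝ, f (r * p.1, p.2) = ∫ p, f p ∂(Measure.map e volume) :=
        (integral_map_equiv e f).symm
    _ = _ := by rw [hmap, integral_smul_measure, ENNReal.toReal_ofReal (abs_nonneg _)]

theorem hasDerivAt_div_mul_sub_sq {𝕜 : Type*} [NontriviallyNormedField 𝕜] {x y z : 𝕜}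
    (h : x * z - y ≠ 0) :
    HasDerivAt (fun w => w / (x * w - y) ^ 2) (-(x * z + y) / (x * z - y) ^ 3) z := by
  have hden : HasDerivAt (fun w => (x * w - y) ^ 2) (2 * (x * z - y) * x) z := by
    simpa using (((hasDerivAt_id' z).const_mul x).sub_const y).fun_pow 2
  refine ((hasDerivAt_id' z).fun_div hden (pow_ne_zero 2 h)).congr_deriv ?_
  field_simp
  ring

namespace Complex

theorem ofReal_mul_sub_ofReal_ne_zero {x y : ℝ} {z : ℂ} (hx : 0 ≤ x) (hy : y < 0)
    (hz : 0 ≤ z.re) : (x : ℂ) * z - y ≠ 0 := by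
  intro h
  have hre := congrArg re h
  simp only [sub_re, re_ofReal_mul, ofReal_re, zero_re] at hre
  nlinarith [mul_nonneg hx hz]

theorem exp_re_pos_of_abs_im_lt {τ : ℂ} (h : |τ.im| < Real.pi / 2) : 0 < (exp τ).re := by
  rw [exp_re]
  exact mul_pos (Real.exp_pos _) (Real.cos_pos_of_mem_Ioo (abs_lt.1 h))

end Complex

theorem liouville_quakebend_holomorphic_general
    (lam K : ℝ) (hlam0 : 0 < lam)
    (a b c d : ℝ) (ha : 0 < a) (hd : d < 0)
    (ω : ℝ) (hω : 0 < ω)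
    (ξ : ℝ × ℝ → ℂ)
    (hHolder : ∀ p q : ℝ × ℝ, ‖ξ p - ξ q‖ ≤ K * dist p q ^ lam)
    (hsupp : ∀ x y : ℝ, (x, y) ∉ Set.Icc a b ×ˢ Set.Icc c d → ξ (x, y) = 0) :
    DifferentiableOn ℂ
      (fun τ : ℂ => ∫ p : ℝ × ℝ,
        ξ p * (Complex.exp (τ * ω) / ((p.1 : ℂ) * Complex.exp (τ * ω) - (p.2 : ℂ)) ^ 2))
      {τ : ℂ | |τ.im| < Real.pi / (2 * ω)} ∧
    ∀ t : ℝ,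
      (∫ p : ℝ × ℝ,
        ξ p * (Complex.exp ((t : ℂ) * ω) / ((p.1 : ℂ) * Complex.exp ((t : ℂ) * ω) - (p.2 : ℂ)) ^ 2))
        = ∫ p : ℝ × ℝ,
            ξ (Real.exp (-(t * ω)) * p.1, p.2) * ((((p.1 - p.2) ^ 2)⁻¹ : ℝ) : ℂ) := by
  have hden : ∀ z : ℂ, 0 ≤ z.re → ∀ p ∈ Set.Icc a b ×ˢ Set.Icc c d, (p.1 : ℂ) * z - p.2 ≠ 0 :=
    fun z hz p hp =>
      Complex.ofReal_mul_sub_ofReal_ne_zero (ha.le.trans hp.1.1) (hp.2.2.trans_lt hd) hz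
  refine ⟨?_, fun t => ?_⟩
  · have hH : DifferentiableOn ℂ (fun z : ℂ => ∫ p : ℝ × ℝ, ξ p * (z / ((p.1 : ℂ) * z - p.2) ^ 2))
        {z | 0 < z.re} :=
      differentiableOn_integral_mul_of_isCompact (isCompact_Icc.prod isCompact_Icc)
        (continuous_of_norm_sub_le_mul_dist_rpow hlam0 hHolder).continuousOn
        (fun p hp => hsupp p.1 p.2 hp) (isOpen_lt continuous_const Complex.continuous_re)
        (fun z hz => continuousOn_const.div (by fun_prop) fun p hp =>
          pow_ne_zero 2 (hden z (le_of_lt hz) p hp))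
        (ContinuousOn.div (by fun_prop) (by fun_prop) fun q hq =>
          pow_ne_zero 3 (hden q.1 (le_of_lt hq.1) q.2 hq.2))
        (fun z hz p hp => hasDerivAt_div_mul_sub_sq (hden z (le_of_lt hz) p hp))
    refine hH.comp (by fun_prop : Differentiable ℂ fun τ : ℂ => Complex.exp (τ * ω)).differentiableOn
      fun τ (hτ : |τ.im| < Real.pi / (2 * ω)) => Complex.exp_re_pos_of_abs_im_lt ?_
    rw [Complex.im_mul_ofReal, abs_mul, abs_of_pos hω]
    calc |τ.im| * ω < Real.pi / (2 * ω) * ω := mul_lt_mul_of_pos_right hτ hω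
      _ = Real.pi / 2 := by field_simp
  · set E := Real.exp (t * ω)
    have hE0 : 0 < E := Real.exp_pos _
    have hE : Complex.exp (t * ω) = E := by simp [E, Complex.ofReal_exp]
    have hscale := integral_comp_mul_fst
      (fun q : ℝ × ℝ => ξ (E⁻¹ * q.1, q.2) * ((((q.1 - q.2) ^ 2)⁻¹ : ℝ) : ℂ)) hE0.ne'
    simp only [inv_mul_cancel_left₀ hE0.ne', abs_of_pos (inv_pos.2 hE0)] at hscale
    rw [hE, Real.exp_neg, ← (eq_inv_smul_iff₀ hE0.ne').1 hscale, ← integral_smul]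
    congr 1 with p
    rw [Complex.real_smul]
    push_cast
    ring

/-- The complexified pairing `G(τ)` of the extended Liouville map along a simple
quake-bend with a Hölder test function `ξ` is holomorphic on the strip
`|Im τ| < π/(2ω)` and agrees with the real earthquake pairing on the real axis. -/
theorem liouville_quakebend_holomorphic
    (lam K : ℝ) (hlam0 : 0 < lam) (hlam1 : lam ≤ 1) (hK : 0 ≤ K)
    (a b c d : ℝ) (ha : 0 < a) (hab : a < b) (hcd : c < d) (hd : d < 0)
    (ω : ℝ) (hω : 0 < ω)
    (ξ : ℝ × ℝ → ℂ)
    (hHolder : ∀ p q : ℝ × ℝ, ‖ξ p - ξ q‖ ≤ K * dist p q ^ lam)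
    (hsupp : ∀ x y : ℝ, (x, y) ∉ Set.Icc a b ×ˢ Set.Icc c d → ξ (x, y) = 0) :
    DifferentiableOn ℂ
      (fun τ : ℂ => ∫ p : ℝ × ℝ,
        ξ p * (Complex.exp (τ * ω) / ((p.1 : ℂ) * Complex.exp (τ * ω) - (p.2 : ℂ)) ^ 2))
      {τ : ℂ | |τ.im| < Real.pi / (2 * ω)} ∧
    ∀ t : ℝ,
      (∫ p : ℝ × ℝ,
        ξ p * (Complex.exp ((t : ℂ) * ω) / ((p.1 : ℂ) * Complex.exp ((t : ℂ) * ω) - (p.2 : ℂ)) ^ 2))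
        = ∫ p : ℝ × ℝ,
            ξ (Real.exp (-(t * ω)) * p.1, p.2) * ((((p.1 - p.2) ^ 2)⁻¹ : ℝ) : ℂ) :=
  liouville_quakebend_holomorphic_general lam K hlam0 a b c d ha hd ω hω ξ hHolder hsupp
end

section
/- Fix 0 < λ ≤ 1, K ≥ 0, reals 0 < a < b and c < d < 0, and ω > 0. Let ξ : ℝ² → ℂ satisfy |ξ(p) − ξ(q)| ≤ K·|p − q|^λ for all p, q, and ξ(x,y) = 0 whenever (x,y) ∉ [a,b] × [c,d]. Then the function F(t) = ∬_{ℝ²} ξ(e^{−tω} x, y) (x − y)^{-2} dx dy is twice differentiable at t = 0 with F″(0) = ω² ∬_{ℝ²} ξ(x,y) · (x² + 4xy + y²) / (x − y)^{4} dx dy. -/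
/-! Substituting `x ↦ e^{tω} x` moves the `t`-dependence from the test function onto the
density: the integral becomes `∫ ξ(x, y) e^{tω} (e^{tω} x - y)⁻²`. On the support of `ξ` one has
`x > 0 > y`, so this density and its `t`-derivatives are continuous on compact sets, and one may
differentiate twice under the integral sign; at `t = 0` the second derivative of the density is
`ω² (x² + 4xy + y²) / (x - y)⁴`. -/

open MeasureTheory Filter
open Real Set Metric Function Topology

theorem continuous_of_norm_sub_le_rpow {X E : Type*} [PseudoMetricSpace X]
    [SeminormedAddCommGroup E] {f : X → E} {lam K : ℝ} (hlam : 0 < lam)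
    (hf : ∀ x y, ‖f x - f y‖ ≤ K * dist x y ^ lam) : Continuous f := by
  refine continuous_iff_continuousAt.2 fun x => tendsto_iff_norm_sub_tendsto_zero.2 ?_
  have hdist : Tendsto (fun y => K * dist y x ^ lam) (𝓝 x) (𝓝 0) := by
    simpa [zero_rpow hlam.ne'] using
      ((continuous_id.dist (continuous_const (y := x))).rpow_const
        fun _ => Or.inr hlam.le).tendsto x |>.const_mul K
  exact squeeze_zero (fun _ => norm_nonneg _) (fun y => hf y x) hdist

theorem integral_comp_mul_fst_s6 {E : Type*} [NormedAddCommGroup E] [NormedSpace ℝ E]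
    (g : ℝ × ℝ → E) {s : ℝ} (hs : s ≠ 0) :
    ∫ q : ℝ × ℝ, g (s * q.1, q.2) = |s⁻¹| • ∫ p : ℝ × ℝ, g p := by
  let e : ℝ × ℝ ≃ₜ ℝ × ℝ := (Homeomorph.mulLeft₀ s hs).prodCongr (Homeomorph.refl ℝ)
  have hmap : Measure.map e (volume : Measure (ℝ × ℝ)) = ENNReal.ofReal |s⁻¹| • volume := by
    change Measure.map (Prod.map (s * ·) id) _ = _
    rw [Measure.volume_eq_prod, ← Measure.map_prod_map _ _ (measurable_const_mul s) measurable_id,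
      Real.map_volume_mul_left hs, Measure.map_id, Measure.prod_smul_left]
  calc ∫ q : ℝ × ℝ, g (s * q.1, q.2) = ∫ q : ℝ × ℝ, g (e q) := rfl
    _ = |s⁻¹| • ∫ p : ℝ × ℝ, g p := by
      rw [← e.measurableEmbedding.integral_map, hmap, integral_smul_measure,
        ENNReal.toReal_ofReal (abs_nonneg _)]

theorem hasDerivAt_integral_mul_of_isCompact {α : Type*} [TopologicalSpace α] [T2Space α]
    [MeasurableSpace α] [OpensMeasurableSpace α] {μ : Measure α} [IsFiniteMeasureOnCompacts μ]
    {B : Set α} (hB : IsCompact B) {ξ : α → ℂ} (hξ : ContinuousOn ξ B)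
    (hξB : ∀ p ∉ B, ξ p = 0) {f f' : ℝ → α → ℝ} {t₀ ε : ℝ} (hε : 0 < ε)
    (hf : ContinuousOn (uncurry f) (closedBall t₀ ε ×ˢ B))
    (hf' : ContinuousOn (uncurry f') (closedBall t₀ ε ×ˢ B))
    (hderiv : ∀ p ∈ B, ∀ t ∈ ball t₀ ε, HasDerivAt (f · p) (f' t p) t) :
    HasDerivAt (fun t => ∫ p, ξ p * f t p ∂μ) (∫ p, ξ p * f' t₀ p ∂μ) t₀ := by
  have hK : IsCompact (closedBall t₀ ε ×ˢ B) := (isCompact_closedBall t₀ ε).prod hB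
  have hint : ∀ g : ℝ → α → ℝ, ContinuousOn (uncurry g) (closedBall t₀ ε ×ˢ B) →
      ∀ t ∈ closedBall t₀ ε, Integrable (fun p => ξ p * g t p) μ := by
    intro g hg t ht
    have hgt : ContinuousOn (g t) B :=
      hg.comp (continuousOn_const.prodMk continuousOn_id) fun _ hp => ⟨ht, hp⟩
    exact ((hξ.mul (Complex.continuous_ofReal.comp_continuousOn hgt)).integrableOn_compact hB)
      |>.integrable_of_forall_notMem_eq_zero fun p hp => by simp [hξB p hp]
  obtain ⟨C, hC⟩ := hK.exists_bound_of_continuousOn (f := fun q : ℝ × α => ξ q.2 * f' q.1 q.2)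
    ((hξ.comp continuousOn_snd fun _ hq => hq.2).mul
      (Complex.continuous_ofReal.comp_continuousOn hf'))
  have hcenter : t₀ ∈ closedBall t₀ ε := mem_closedBall_self hε.le
  refine (hasDerivAt_integral_of_dominated_loc_of_deriv_le (F' := fun t p => ξ p * f' t p)
    (bound := B.indicator fun _ => C) (ball_mem_nhds t₀ hε)
    (eventually_of_mem (ball_mem_nhds t₀ hε) fun t ht =>
      (hint f hf t (ball_subset_closedBall ht)).aestronglyMeasurable)
    (hint f hf t₀ hcenter) (hint f' hf' t₀ hcenter).aestronglyMeasurable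
    (ae_of_all _ fun p t ht => ?_)
    ((integrable_indicator_iff hB.measurableSet).2 (integrableOn_const hB.measure_ne_top))
    (ae_of_all _ fun p t ht => ?_)).2
  · by_cases hp : p ∈ B
    · rw [indicator_of_mem hp]
      exact hC (t, p) ⟨ball_subset_closedBall ht, hp⟩
    · simp [hξB p hp, indicator_of_notMem hp]
  · by_cases hp : p ∈ B
    · exact ((hderiv p hp t ht).ofReal_comp).const_mul (ξ p)
    · simpa [hξB p hp] using hasDerivAt_const t (0 : ℂ)

noncomputable def earthquakeDensity (ω t : ℝ) (p : ℝ × ℝ) : ℝ :=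
  exp (t * ω) / (exp (t * ω) * p.1 - p.2) ^ 2

noncomputable def earthquakeDensityDeriv (ω t : ℝ) (p : ℝ × ℝ) : ℝ :=
  -(ω * exp (t * ω) * (exp (t * ω) * p.1 + p.2)) / (exp (t * ω) * p.1 - p.2) ^ 3

noncomputable def earthquakeDensityDeriv2 (ω t : ℝ) (p : ℝ × ℝ) : ℝ :=
  ω ^ 2 * exp (t * ω) * ((exp (t * ω) * p.1) ^ 2 + 4 * (exp (t * ω) * p.1) * p.2 + p.2 ^ 2) /
    (exp (t * ω) * p.1 - p.2) ^ 4

theorem hasDerivAt_earthquakeDensity {ω t : ℝ} {p : ℝ × ℝ} (h : exp (t * ω) * p.1 - p.2 ≠ 0) :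
    HasDerivAt (earthquakeDensity ω · p) (earthquakeDensityDeriv ω t p) t := by
  have hexp := (hasDerivAt_mul_const ω (x := t)).exp
  refine (hexp.div (((hexp.mul_const p.1).sub_const p.2).pow 2) (pow_ne_zero 2 h)).congr_deriv ?_
  simp only [earthquakeDensityDeriv, Pi.pow_apply]
  push_cast
  field_simp
  ring

theorem hasDerivAt_earthquakeDensityDeriv {ω t : ℝ} {p : ℝ × ℝ}
    (h : exp (t * ω) * p.1 - p.2 ≠ 0) :
    HasDerivAt (earthquakeDensityDeriv ω · p) (earthquakeDensityDeriv2 ω t p) t := by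
  have hexp := (hasDerivAt_mul_const ω (x := t)).exp
  have hnum := ((hexp.const_mul ω).mul ((hexp.mul_const p.1).add_const p.2)).neg
  refine (hnum.div (((hexp.mul_const p.1).sub_const p.2).pow 3) (pow_ne_zero 3 h)).congr_deriv ?_
  simp only [earthquakeDensityDeriv2, Pi.pow_apply, Pi.mul_apply, Pi.neg_apply]
  push_cast
  field_simp
  ring

theorem continuousOn_earthquakeDensity {ω : ℝ} {S : Set (ℝ × (ℝ × ℝ))}
    (h : ∀ q ∈ S, exp (q.1 * ω) * q.2.1 - q.2.2 ≠ 0) :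
    ContinuousOn (uncurry (earthquakeDensity ω)) S :=
  ContinuousOn.div (by fun_prop) (by fun_prop) fun q hq => pow_ne_zero 2 (h q hq)

theorem continuousOn_earthquakeDensityDeriv {ω : ℝ} {S : Set (ℝ × (ℝ × ℝ))}
    (h : ∀ q ∈ S, exp (q.1 * ω) * q.2.1 - q.2.2 ≠ 0) :
    ContinuousOn (uncurry (earthquakeDensityDeriv ω)) S :=
  ContinuousOn.div (by fun_prop) (by fun_prop) fun q hq => pow_ne_zero 3 (h q hq)

theorem continuousOn_earthquakeDensityDeriv2 {ω : ℝ} {S : Set (ℝ × (ℝ × ℝ))}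
    (h : ∀ q ∈ S, exp (q.1 * ω) * q.2.1 - q.2.2 ≠ 0) :
    ContinuousOn (uncurry (earthquakeDensityDeriv2 ω)) S :=
  ContinuousOn.div (by fun_prop) (by fun_prop) fun q hq => pow_ne_zero 4 (h q hq)

theorem integral_comp_exp_mul_fst_liouville (ξ : ℝ × ℝ → ℂ) (ω t : ℝ) :
    ∫ p : ℝ × ℝ, ξ (exp (-(t * ω)) * p.1, p.2) * ((((p.1 - p.2) ^ 2)⁻¹ : ℝ) : ℂ) =
      ∫ p : ℝ × ℝ, ξ p * (earthquakeDensity ω t p : ℂ) := by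
  refine smul_right_injective ℂ (exp_pos (t * ω)).ne' ?_
  dsimp only
  rw [← integral_smul]
  convert integral_comp_mul_fst_s6 (fun p => ξ p * (earthquakeDensity ω t p : ℂ))
    (exp_pos (-(t * ω))).ne' using 2
  · ext q
    simp only [earthquakeDensity, ← mul_assoc, ← exp_add, add_neg_cancel, exp_zero, one_mul,
      Complex.real_smul]
    push_cast
    ring
  · rw [← exp_neg, neg_neg, abs_of_pos (exp_pos _)]

theorem earthquakeDensityDeriv2_zero (ω : ℝ) (p : ℝ × ℝ) :
    earthquakeDensityDeriv2 ω 0 p =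
      ω ^ 2 * ((p.1 ^ 2 + 4 * p.1 * p.2 + p.2 ^ 2) / (p.1 - p.2) ^ 4) := by
  simp only [earthquakeDensityDeriv2, zero_mul, exp_zero, one_mul]
  ring

theorem exp_mul_fst_sub_snd_pos (ω t : ℝ) {p : ℝ × ℝ} (hp : p ∈ Ioi 0 ×ˢ Iio 0) :
    0 < exp (t * ω) * p.1 - p.2 := by
  have hp₁ : 0 < exp (t * ω) * p.1 := mul_pos (exp_pos _) hp.1
  linarith [mem_Iio.1 hp.2]

theorem hasDerivAt_integral_mul_earthquakeDensity {μ : Measure (ℝ × ℝ)}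
    [IsFiniteMeasureOnCompacts μ] {B : Set (ℝ × ℝ)} (hB : IsCompact B)
    (hBq : B ⊆ Ioi 0 ×ˢ Iio 0) {ξ : ℝ × ℝ → ℂ} (hξ : ContinuousOn ξ B)
    (hξB : ∀ p ∉ B, ξ p = 0) (ω t₀ : ℝ) :
    HasDerivAt (fun t => ∫ p, ξ p * earthquakeDensity ω t p ∂μ)
      (∫ p, ξ p * earthquakeDensityDeriv ω t₀ p ∂μ) t₀ :=
  hasDerivAt_integral_mul_of_isCompact hB hξ hξB one_pos
    (continuousOn_earthquakeDensity fun _ hq => (exp_mul_fst_sub_snd_pos ω _ (hBq hq.2)).ne')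
    (continuousOn_earthquakeDensityDeriv fun _ hq =>
      (exp_mul_fst_sub_snd_pos ω _ (hBq hq.2)).ne')
    fun _ hp _ _ => hasDerivAt_earthquakeDensity (exp_mul_fst_sub_snd_pos ω _ (hBq hp)).ne'

theorem hasDerivAt_integral_mul_earthquakeDensityDeriv {μ : Measure (ℝ × ℝ)}
    [IsFiniteMeasureOnCompacts μ] {B : Set (ℝ × ℝ)} (hB : IsCompact B)
    (hBq : B ⊆ Ioi 0 ×ˢ Iio 0) {ξ : ℝ × ℝ → ℂ} (hξ : ContinuousOn ξ B)
    (hξB : ∀ p ∉ B, ξ p = 0) (ω t₀ : ℝ) :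
    HasDerivAt (fun t => ∫ p, ξ p * earthquakeDensityDeriv ω t p ∂μ)
      (∫ p, ξ p * earthquakeDensityDeriv2 ω t₀ p ∂μ) t₀ :=
  hasDerivAt_integral_mul_of_isCompact hB hξ hξB one_pos
    (continuousOn_earthquakeDensityDeriv fun _ hq =>
      (exp_mul_fst_sub_snd_pos ω _ (hBq hq.2)).ne')
    (continuousOn_earthquakeDensityDeriv2 fun _ hq =>
      (exp_mul_fst_sub_snd_pos ω _ (hBq hq.2)).ne')
    fun _ hp _ _ => hasDerivAt_earthquakeDensityDeriv (exp_mul_fst_sub_snd_pos ω _ (hBq hp)).ne'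

theorem liouville_second_deriv_simple_earthquake_general
    (lam K : ℝ) (hlam0 : 0 < lam)
    (a b c d : ℝ) (ha : 0 < a) (hd : d < 0)
    (ω : ℝ)
    (ξ : ℝ × ℝ → ℂ)
    (hHolder : ∀ p q : ℝ × ℝ, ‖ξ p - ξ q‖ ≤ K * dist p q ^ lam)
    (hsupp : ∀ x y : ℝ, (x, y) ∉ Set.Icc a b ×ˢ Set.Icc c d → ξ (x, y) = 0) :
    ∃ F' : ℝ → ℂ,
      (∀ᶠ t in nhds (0 : ℝ),
        HasDerivAt
          (fun t : ℝ => ∫ p : ℝ × ℝ,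
            ξ (Real.exp (-(t * ω)) * p.1, p.2) * ((((p.1 - p.2) ^ 2)⁻¹ : ℝ) : ℂ))
          (F' t) t) ∧
      HasDerivAt F'
        (((ω : ℂ)) ^ 2 * ∫ p : ℝ × ℝ,
          ξ p * (((p.1 ^ 2 + 4 * p.1 * p.2 + p.2 ^ 2) / (p.1 - p.2) ^ 4 : ℝ) : ℂ))
        0 := by
  have hB : IsCompact (Icc a b ×ˢ Icc c d) := isCompact_Icc.prod isCompact_Icc
  have hBq : Icc a b ×ˢ Icc c d ⊆ Ioi 0 ×ˢ Iio 0 :=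
    prod_mono (fun _ hx => ha.trans_le hx.1) fun _ hy => hy.2.trans_lt hd
  have hξ : ContinuousOn ξ (Icc a b ×ˢ Icc c d) :=
    (continuous_of_norm_sub_le_rpow hlam0 hHolder).continuousOn
  have hξB : ∀ p ∉ Icc a b ×ˢ Icc c d, ξ p = 0 := fun p hp => hsupp p.1 p.2 hp
  refine ⟨fun t => ∫ p, ξ p * earthquakeDensityDeriv ω t p, .of_forall fun t => ?_, ?_⟩
  · simp_rw [integral_comp_exp_mul_fst_liouville]
    exact hasDerivAt_integral_mul_earthquakeDensity hB hBq hξ hξB ω t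
  · refine (hasDerivAt_integral_mul_earthquakeDensityDeriv hB hBq hξ hξB ω 0).congr_deriv ?_
    rw [← integral_const_mul]
    congr 1 with p
    rw [earthquakeDensityDeriv2_zero]
    push_cast
    ring

/-- Second derivative at `t = 0` of the Liouville measure along a simple
earthquake path:
`d²/dt²|₀ L(E_g^{tω})(ξ) = ω² ∫ ξ(h) (x² + 4xy + y²)/(x − y)⁴ dL(h)`. -/
theorem liouville_second_deriv_simple_earthquake
    (lam K : ℝ) (hlam0 : 0 < lam) (hlam1 : lam ≤ 1) (hK : 0 ≤ K)
    (a b c d : ℝ) (ha : 0 < a) (hab : a < b) (hcd : c < d) (hd : d < 0)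
    (ω : ℝ) (hω : 0 < ω)
    (ξ : ℝ × ℝ → ℂ)
    (hHolder : ∀ p q : ℝ × ℝ, ‖ξ p - ξ q‖ ≤ K * dist p q ^ lam)
    (hsupp : ∀ x y : ℝ, (x, y) ∉ Set.Icc a b ×ˢ Set.Icc c d → ξ (x, y) = 0) :
    ∃ F' : ℝ → ℂ,
      (∀ᶠ t in nhds (0 : ℝ),
        HasDerivAt
          (fun t : ℝ => ∫ p : ℝ × ℝ,
            ξ (Real.exp (-(t * ω)) * p.1, p.2) * ((((p.1 - p.2) ^ 2)⁻¹ : ℝ) : ℂ))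
          (F' t) t) ∧
      HasDerivAt F'
        (((ω : ℂ)) ^ 2 * ∫ p : ℝ × ℝ,
          ξ p * (((p.1 ^ 2 + 4 * p.1 * p.2 + p.2 ^ 2) / (p.1 - p.2) ^ 4 : ℝ) : ℂ))
        0 :=
  liouville_second_deriv_simple_earthquake_general lam K hlam0 a b c d ha hd ω ξ hHolder hsupp
end
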